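/- arXiv:2503.13849 — 4 statements merged into one kernel-verified Lean document; each statement's English description precedes it below -/
import Mathlib

section
/- Let f : ℝⁿ → ℝⁿ be a super-linearizable polynomial vector field and let ψ : ℝⁿ → ℝⁿ be a stably tame polynomial automorphism with polynomial inverse ψ⁻¹. Then the transformed polynomial vector field h(y) = Dψ(ψ⁻¹(y)) · f(ψ⁻¹(y)) is super-linearizable. -/
open Matrix MvPolynomial

/-- A map between finite-dimensional real coordinate spaces is polynomial if each
component is given by a real multivariate polynomial. -/
def IsPolyMap {n m : ℕ} (f : (Fin n → ℝ) → (Fin m → ℝ)) : Prop :=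
  ∃ P : Fin m → MvPolynomial (Fin n) ℝ, ∀ x i, f x i = MvPolynomial.eval x (P i)

/-- A vector field `f : ℝⁿ → ℝⁿ` is super-linearizable if there are `k ∈ ℕ`, a matrix
`A ∈ ℝ^{(n+k)×(n+k)}` and a polynomial map `p : ℝⁿ → ℝᵏ` such that every solution of
`ẋ = f(x)` starting at `x₀` is, for `t ≥ 0`, the projection on the first `n` coordinates
of `t ↦ exp(tA)·(x₀, p(x₀))`. -/
def IsSuperLinearizable {n : ℕ} (f : (Fin n → ℝ) → (Fin n → ℝ)) : Prop :=
  ∃ (k : ℕ) (A : Matrix (Fin (n + k)) (Fin (n + k)) ℝ)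
    (p : (Fin n → ℝ) → (Fin k → ℝ)), IsPolyMap p ∧
    ∀ (x₀ : Fin n → ℝ) (x : ℝ → (Fin n → ℝ)),
      x 0 = x₀ →
      (∀ t : ℝ, 0 ≤ t → HasDerivAt x (f (x t)) t) →
      ∀ t : ℝ, 0 ≤ t → ∀ i : Fin n,
        (NormedSpace.exp (t • A)).mulVec (Fin.append x₀ (p x₀)) (Fin.castAdd k i) = x t i

/-- An elementary transformation of `ℝⁿ`: it adds to the last coordinate a polynomial `g`
of degree greater than `1` depending only on the first `n-1` coordinates. -/
def IsElementaryMap {n : ℕ} (φ : (Fin n → ℝ) → (Fin n → ℝ)) : Prop :=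
  ∃ g : MvPolynomial (Fin n) ℝ, 1 < g.totalDegree ∧
    (∀ i : Fin n, (i : ℕ) + 1 = n → i ∉ g.vars) ∧
    ∀ x j, φ x j = if (j : ℕ) + 1 = n then x j + MvPolynomial.eval x g else x j

/-- An affine automorphism of `ℝⁿ`: `x ↦ Ax + b` with `A` invertible. -/
def IsAffineAut {n : ℕ} (φ : (Fin n → ℝ) → (Fin n → ℝ)) : Prop :=
  ∃ (A : Matrix (Fin n) (Fin n) ℝ) (b : Fin n → ℝ), IsUnit A.det ∧
    ∀ x, φ x = A.mulVec x + b

/-- A tame automorphism: a finite composition of affine and elementary transformations. -/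
def IsTame {n : ℕ} (φ : (Fin n → ℝ) → (Fin n → ℝ)) : Prop :=
  ∃ L : List ((Fin n → ℝ) → (Fin n → ℝ)),
    (∀ ψ ∈ L, IsAffineAut ψ ∨ IsElementaryMap ψ) ∧ φ = L.foldr (· ∘ ·) id

/-- A polynomial automorphism `ψ : ℝⁿ → ℝⁿ` is stably tame if it becomes tame after
adjoining finitely many stabilizing variables given by a polynomial map. -/
def IsStablyTame {n : ℕ} (ψ : (Fin n → ℝ) → (Fin n → ℝ)) : Prop :=
  ∃ m : ℕ, 0 < m ∧
    ∃ (φ : (Fin (n + m) → ℝ) → (Fin (n + m) → ℝ)) (y : (Fin n → ℝ) → (Fin m → ℝ)),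
      IsTame φ ∧ IsPolyMap y ∧
      ∀ (x : Fin n → ℝ) (i : Fin n), φ (Fin.append x (y x)) (Fin.castAdd m i) = ψ x i

/-!
Write a solution of `ẏ = h(y)` as `y = ψ ∘ x`, where `ẋ = f(x)`. By super-linearizability of `f`,
`x(t)` is the projection of a linear flow `w(t) = exp(tA) w₀`, so `y(t) = ψ(Π w(t))` is a
polynomial in `w(t)`. Along `ẇ = A w` every polynomial satisfies `d/dt P(w) = (D_A P)(w)` for the
derivation `D_A = ∑ⱼ (A w)ⱼ ∂ⱼ`, which does not raise total degree. Hence the polynomials of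
degree at most `deg ψ` form a finite-dimensional `D_A`-invariant space, and evaluating a finite
spanning family of it along `w` yields a linear system `Ż = B Z` whose first coordinates are `y`.
-/

section PolyMap

lemma differentiable_eval {ι : Type*} [Fintype ι] (P : MvPolynomial ι ℝ) :
    Differentiable ℝ fun x : ι → ℝ => eval x P := by
  induction P using MvPolynomial.induction_on with
  | C a => simp
  | add p q hp hq => simpa using hp.fun_add hq
  | mul_X p i hp => simpa using hp.fun_mul (differentiable_apply i)

variable {l m n : ℕ}

lemma isPolyMap_id : IsPolyMap (id : (Fin n → ℝ) → (Fin n → ℝ)) :=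
  ⟨X, by simp⟩

lemma IsPolyMap.differentiable {g : (Fin n → ℝ) → (Fin m → ℝ)} (hg : IsPolyMap g) :
    Differentiable ℝ g := by
  obtain ⟨P, hP⟩ := hg
  rw [show g = fun x i => eval x (P i) from funext₂ hP]
  exact differentiable_pi.mpr fun i => differentiable_eval (P i)

lemma IsPolyMap.comp {g : (Fin m → ℝ) → (Fin l → ℝ)} {f : (Fin n → ℝ) → (Fin m → ℝ)}
    (hg : IsPolyMap g) (hf : IsPolyMap f) : IsPolyMap (g ∘ f) := by
  obtain ⟨P, hP⟩ := hg
  obtain ⟨Q, hQ⟩ := hf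
  refine ⟨fun i => aeval Q (P i), fun x i => ?_⟩
  have hfx : f x = fun j => eval x (Q j) := funext (hQ x)
  simpa [hP, hfx] using (comp_aeval_apply Q (aeval x) (P i)).symm

lemma IsPolyMap.append {f : (Fin n → ℝ) → (Fin m → ℝ)} {g : (Fin n → ℝ) → (Fin l → ℝ)}
    (hf : IsPolyMap f) (hg : IsPolyMap g) : IsPolyMap fun x => Fin.append (f x) (g x) := by
  obtain ⟨P, hP⟩ := hf
  obtain ⟨Q, hQ⟩ := hg
  refine ⟨Fin.append P Q, fun x i => ?_⟩
  cases i using Fin.addCases <;> simp [hP, hQ]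

end PolyMap

section LinearVectorField

variable {ι : Type*} [Fintype ι] (A : Matrix ι ι ℝ)

/-- The Lie derivative `P ↦ ∑ⱼ (A z)ⱼ ∂P/∂zⱼ` along the linear vector field `z ↦ A z`. -/
noncomputable def linearFieldDerivation : Derivation ℝ (MvPolynomial ι ℝ) (MvPolynomial ι ℝ) :=
  mkDerivation ℝ fun i => ∑ j, C (A i j) * X j

lemma eval_linearFieldDerivation_X (z : ι → ℝ) (i : ι) :
    eval z (linearFieldDerivation A (X i)) = (A *ᵥ z) i := by
  simp [linearFieldDerivation, mulVec, dotProduct]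

lemma totalDegree_linearFieldDerivation_X_le (i : ι) :
    (linearFieldDerivation A (X i)).totalDegree ≤ 1 := by
  rw [linearFieldDerivation, mkDerivation_X]
  exact totalDegree_finsetSum_le fun j _ =>
    (totalDegree_mul _ _).trans (by simp [totalDegree_X])

lemma totalDegree_linearFieldDerivation_monomial_le (s : ι →₀ ℕ) (a : ℝ) :
    (linearFieldDerivation A (monomial s a)).totalDegree ≤ (monomial s a).totalDegree := by
  refine induction_on_monomial
    (motive := fun P => (linearFieldDerivation A P).totalDegree ≤ P.totalDegree)
    (fun a => by simp) (fun p i hp => ?_) s a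
  rcases eq_or_ne p 0 with rfl | hp0
  · simp
  rw [totalDegree_mul_of_isDomain hp0 (X_ne_zero i), totalDegree_X, Derivation.leibniz,
    smul_eq_mul, smul_eq_mul]
  refine (totalDegree_add _ _).trans (max_le ?_ ?_)
  · exact (totalDegree_mul _ _).trans (by grw [totalDegree_linearFieldDerivation_X_le])
  · exact (totalDegree_mul _ _).trans (by rw [totalDegree_X]; omega)

lemma totalDegree_linearFieldDerivation_le (P : MvPolynomial ι ℝ) :
    (linearFieldDerivation A P).totalDegree ≤ P.totalDegree := by
  conv_lhs => rw [← support_sum_monomial_coeff P]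
  rw [map_sum]
  refine totalDegree_finsetSum_le fun s hs => ?_
  exact (totalDegree_linearFieldDerivation_monomial_le A s _).trans
    ((totalDegree_monomial_le s _).trans (le_totalDegree hs))

lemma HasDerivAt.eval_of_mulVec {w : ℝ → ι → ℝ} {t : ℝ} (hw : HasDerivAt w (A *ᵥ w t) t)
    (P : MvPolynomial ι ℝ) :
    HasDerivAt (fun s => eval (w s) P) (eval (w t) (linearFieldDerivation A P)) t := by
  induction P using MvPolynomial.induction_on with
  | C a => simpa using hasDerivAt_const t a
  | add p q hp hq => simpa using hp.fun_add hq
  | mul_X p i hp =>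
    have hwi : HasDerivAt (fun s => w s i) ((A *ᵥ w t) i) t := hasDerivAt_pi.mp hw i
    simpa [Derivation.leibniz, eval_linearFieldDerivation_X, add_comm, mul_comm] using
      hp.fun_mul hwi

end LinearVectorField

section LinearODE

variable {ι : Type*} [Fintype ι] [DecidableEq ι] (M : Matrix ι ι ℝ)

lemma hasDerivAt_exp_smul_mulVec (z : ι → ℝ) (t : ℝ) :
    HasDerivAt (fun s : ℝ => NormedSpace.exp (s • M) *ᵥ z)
      (M *ᵥ (NormedSpace.exp (t • M) *ᵥ z)) t := by
  let _ : NormedRing (Matrix ι ι ℝ) := Matrix.linftyOpNormedRing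
  let _ : NormedAlgebra ℝ (Matrix ι ι ℝ) := Matrix.linftyOpNormedAlgebra
  let applyTo : Matrix ι ι ℝ →ₗ[ℝ] (ι → ℝ) :=
    { toFun := fun B => B *ᵥ z
      map_add' := fun B C => add_mulVec B C z
      map_smul' := fun c B => smul_mulVec c B z }
  rw [mulVec_mulVec]
  exact applyTo.toContinuousLinearMap.hasFDerivAt.comp_hasDerivAt t
    (hasDerivAt_exp_smul_const' M t)

lemma eq_exp_smul_mulVec_of_hasDerivAt {Z : ℝ → ι → ℝ} (hZ : ∀ t, HasDerivAt Z (M *ᵥ Z t) t)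
    (t : ℝ) : Z t = NormedSpace.exp (t • M) *ᵥ Z 0 := by
  have hlip := (Matrix.toLin' M).toContinuousLinearMap.lipschitz
  have hunique := ODE_solution_unique_univ (v := fun _ z => M *ᵥ z) (s := fun _ => Set.univ)
    (t₀ := 0) (fun _ => hlip.lipschitzOnWith) (fun t => ⟨hZ t, trivial⟩)
    (fun t => ⟨hasDerivAt_exp_smul_mulVec M (Z 0) t, trivial⟩) (by simp)
  exact congrFun hunique t

end LinearODE

section PolynomialObservables

variable {ι : Type*} [Fintype ι] [DecidableEq ι] (A : Matrix ι ι ℝ)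

theorem eval_exp_smul_mulVec_eq_exp_smul_mulVec_eval {ρ : Type*} [Fintype ρ] [DecidableEq ρ]
    (P : ρ → MvPolynomial ι ℝ) (B : Matrix ρ ρ ℝ)
    (hB : ∀ r, linearFieldDerivation A (P r) = ∑ c, B r c • P c) (z : ι → ℝ) (t : ℝ) :
    (fun r => eval (NormedSpace.exp (t • A) *ᵥ z) (P r))
      = NormedSpace.exp (t • B) *ᵥ fun r => eval z (P r) := by
  set Z : ℝ → ρ → ℝ := fun s r => eval (NormedSpace.exp (s • A) *ᵥ z) (P r)
  have hZ : ∀ s, HasDerivAt Z (B *ᵥ Z s) s := fun s => hasDerivAt_pi.mpr fun r => by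
    simpa [hB, mulVec, dotProduct] using
      (hasDerivAt_exp_smul_mulVec A z s).eval_of_mulVec A (P r)
  simpa [Z] using eq_exp_smul_mulVec_of_hasDerivAt B hZ t

theorem exists_linearFlow_extension {m : ℕ} (Q : Fin m → MvPolynomial ι ℝ) :
    ∃ (K : ℕ) (R : Fin K → MvPolynomial ι ℝ) (B : Matrix (Fin (m + K)) (Fin (m + K)) ℝ),
      ∀ (z : ι → ℝ) (t : ℝ), (fun r => eval (NormedSpace.exp (t • A) *ᵥ z) (Fin.append Q R r))
        = NormedSpace.exp (t • B) *ᵥ fun r => eval z (Fin.append Q R r) := by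
  set W := restrictTotalDegree ι ℝ (Finset.univ.sup fun i => (Q i).totalDegree)
  have hQ : ∀ i, Q i ∈ W := fun i =>
    (mem_restrictTotalDegree _ _ _).mpr (Finset.le_sup (f := fun i => (Q i).totalDegree)
      (Finset.mem_univ i))
  have hW : ∀ P ∈ W, linearFieldDerivation A P ∈ W := fun P hP =>
    (mem_restrictTotalDegree _ _ _).mpr
      ((totalDegree_linearFieldDerivation_le A P).trans ((mem_restrictTotalDegree _ _ _).mp hP))
  obtain ⟨K, R, hR⟩ := Submodule.fg_iff_exists_fin_generating_family.mp
    (Module.Finite.iff_fg.mp inferInstance : W.FG)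
  have hP : ∀ r, Fin.append Q R r ∈ W := Fin.addCases (by simpa using hQ)
    (fun j => by simpa [← hR] using Submodule.subset_span (Set.mem_range_self (f := R) j))
  have hcoeff : ∀ r, ∃ c : Fin K → ℝ,
      ∑ j, c j • R j = linearFieldDerivation A (Fin.append Q R r) :=
    fun r => (Submodule.mem_span_range_iff_exists_fun ℝ).mp (hR ▸ hW _ (hP r))
  choose c hc using hcoeff
  refine ⟨K, R, fun r => Fin.append 0 (c r), eval_exp_smul_mulVec_eq_exp_smul_mulVec_eval A _ _
    fun r => ?_⟩
  simp [Fin.sum_univ_add, hc]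

end PolynomialObservables

theorem isSuperLinearizable_of_forall_eq_eval {n N : ℕ} {h : (Fin n → ℝ) → (Fin n → ℝ)}
    (A : Matrix (Fin N) (Fin N) ℝ) (Q : Fin n → MvPolynomial (Fin N) ℝ)
    {q : (Fin n → ℝ) → (Fin N → ℝ)} (hq : IsPolyMap q)
    (hsol : ∀ y : ℝ → Fin n → ℝ, (∀ t, 0 ≤ t → HasDerivAt y (h (y t)) t) →
      ∀ t, 0 ≤ t → ∀ i, y t i = eval (NormedSpace.exp (t • A) *ᵥ q (y 0)) (Q i)) :
    IsSuperLinearizable h := by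
  obtain ⟨K, R, B, hB⟩ := exists_linearFlow_extension A Q
  refine ⟨K, B, fun y₀ j => eval (q y₀) (R j),
    IsPolyMap.comp (g := fun z j => eval z (R j)) ⟨R, fun _ _ => rfl⟩ hq,
    fun y₀ y hy₀ hy t ht i => ?_⟩
  subst hy₀
  have hinit : (fun r => eval (q (y 0)) (Fin.append Q R r))
      = Fin.append (y 0) fun j => eval (q (y 0)) (R j) := by
    funext r
    cases r using Fin.addCases <;> simp [hsol y hy 0 le_rfl]
  rw [← hinit, ← hB, hsol y hy t ht i]
  simp

lemma hasDerivAt_comp_of_hasDerivAt_pushforward {E : Type*} [NormedAddCommGroup E]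
    [NormedSpace ℝ E] {ψ ψinv f : E → E} (hψ : Differentiable ℝ ψ)
    (hψinv : Differentiable ℝ ψinv) (hinv : Function.LeftInverse ψinv ψ)
    (hinv' : Function.RightInverse ψinv ψ) {y : ℝ → E} {t : ℝ}
    (hy : HasDerivAt y (fderiv ℝ ψ (ψinv (y t)) (f (ψinv (y t)))) t) :
    HasDerivAt (ψinv ∘ y) (f (ψinv (y t))) t := by
  set a := ψinv (y t)
  have hchain : (fderiv ℝ ψinv (ψ a)).comp (fderiv ℝ ψ a) = ContinuousLinearMap.id ℝ E := by
    rw [← fderiv_comp a (hψinv _) (hψ _), hinv.comp_eq_id, fderiv_id]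
  convert (hψinv (y t)).hasFDerivAt.comp_hasDerivAt t hy using 1
  rw [← hinv' (y t), ← ContinuousLinearMap.comp_apply, hchain]
  rfl

theorem superlinearizable_of_stablyTame_general {n : ℕ}
    (f ψ ψinv h : (Fin n → ℝ) → (Fin n → ℝ))
    (hfsl : IsSuperLinearizable f)
    (hψpoly : IsPolyMap ψ) (hψinvpoly : IsPolyMap ψinv)
    (hinv : Function.LeftInverse ψinv ψ) (hinv' : Function.RightInverse ψinv ψ)
    (hh : ∀ y, h y = fderiv ℝ ψ (ψinv y) (f (ψinv y))) :
    IsSuperLinearizable h := by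
  obtain ⟨k, A, p, hp, hflow⟩ := hfsl
  have hψdiff := hψpoly.differentiable
  obtain ⟨Ψ, hΨ⟩ := hψpoly
  refine isSuperLinearizable_of_forall_eq_eval A (fun i => rename (Fin.castAdd k) (Ψ i))
    ((isPolyMap_id.append hp).comp hψinvpoly) fun y hy t ht i => ?_
  have hx : ∀ s, 0 ≤ s → HasDerivAt (ψinv ∘ y) (f ((ψinv ∘ y) s)) s := fun s hs =>
    hasDerivAt_comp_of_hasDerivAt_pushforward hψdiff hψinvpoly.differentiable hinv hinv'
      (hh (y s) ▸ hy s hs)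
  have hxt := hflow (ψinv (y 0)) (ψinv ∘ y) rfl hx t ht
  calc y t i = ψ (ψinv (y t)) i := by rw [hinv' (y t)]
    _ = _ := by simp [eval_rename, hΨ, Function.comp_def, hxt]

/-- If `f` is a super-linearizable polynomial vector field and `ψ` is a stably tame
polynomial automorphism with polynomial inverse `ψinv`, then
`h(y) = Dψ(ψ⁻¹(y)) · f(ψ⁻¹(y))` is super-linearizable. -/
theorem superlinearizable_of_stablyTame {n : ℕ}
    (f ψ ψinv h : (Fin n → ℝ) → (Fin n → ℝ))
    (hfpoly : IsPolyMap f) (hfsl : IsSuperLinearizable f)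
    (hψpoly : IsPolyMap ψ) (hψinvpoly : IsPolyMap ψinv)
    (hψ : IsStablyTame ψ)
    (hinv : Function.LeftInverse ψinv ψ) (hinv' : Function.RightInverse ψinv ψ)
    (hh : ∀ y, h y = fderiv ℝ ψ (ψinv y) (f (ψinv y))) :
    IsSuperLinearizable h :=
  superlinearizable_of_stablyTame_general f ψ ψinv h hfsl hψpoly hψinvpoly hinv hinv' hh
end

section
/- Let f : ℝⁿ → ℝⁿ be a super-linearizable polynomial vector field and let φ(x) = Ax + b be an affine automorphism of ℝⁿ (A ∈ ℝ^{n×n} invertible, b ∈ ℝⁿ). Then the transformed polynomial vector field h(y) = A f(A⁻¹(y − b)) (the dynamics of y = φ(x) when ẋ = f(x)) is super-linearizable. -/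
/-!
A solution of `ẋ = f(x)` is read off from the linear flow `w(t) = exp(tM) w₀` on the lift
space `ℝⁿ⁺ᵏ`, where `w₀ = (x₀, p(x₀))`. The affine change `y = Ax + b` lifts to the affine map
`(x, u) ↦ (Ax + b, u)` of the lift space, and an affine map becomes linear once a coordinate
constantly equal to `1` is adjoined (homogeneous coordinates). Extending `M` by a zero row and
column keeps that coordinate equal to `1` along the flow, so conjugating the extended generator by
the homogeneous matrix of the lifted affine map gives a super-linearization of the new field, with
`k + 1` auxiliary coordinates `y ↦ (p(A⁻¹(y - b)), 1)`.
-/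

open Matrix MvPolynomial

open NormedSpace

namespace IsPolyMap

variable {n m r : ℕ}

theorem comp_s7 {g : (Fin m → ℝ) → (Fin r → ℝ)} {f : (Fin n → ℝ) → (Fin m → ℝ)}
    (hg : IsPolyMap g) (hf : IsPolyMap f) : IsPolyMap (g ∘ f) := by
  obtain ⟨Q, hQ⟩ := hg
  obtain ⟨P, hP⟩ := hf
  refine ⟨fun i => bind₁ P (Q i), fun x i => ?_⟩
  rw [Function.comp_apply, hQ, funext (hP x)]
  exact (eval₂Hom_bind₁ (RingHom.id ℝ) x P (Q i)).symm

theorem snoc {f : (Fin n → ℝ) → (Fin m → ℝ)} (hf : IsPolyMap f) (c : ℝ) :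
    IsPolyMap fun x => Fin.snoc (α := fun _ => ℝ) (f x) c := by
  obtain ⟨P, hP⟩ := hf
  refine ⟨Fin.snoc (α := fun _ => MvPolynomial (Fin n) ℝ) P (C c), fun x i => ?_⟩
  induction i using Fin.lastCases <;> simp [hP]

end IsPolyMap

theorem isPolyMap_mulVec_sub {n m : ℕ} (B : Matrix (Fin m) (Fin n) ℝ) (b : Fin n → ℝ) :
    IsPolyMap fun y => B *ᵥ (y - b) :=
  ⟨fun i => ∑ j, C (B i j) * (X j - C (b j)), fun y i => by simp [mulVec, dotProduct]⟩

theorem Fin.snoc_eq_sumElim_comp_finSumFinEquiv_symm {α : Type*} {N : ℕ} (u : Fin N → α)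
    (c : α) :
    Fin.snoc u c = Sum.elim u (fun _ => c) ∘ finSumFinEquiv.symm := by
  ext j
  induction j using Fin.lastCases <;> simp

theorem HasDerivAt.mulVec_sub_const {ι κ : Type*} [Fintype ι] [Fintype κ]
    {y : ℝ → ι → ℝ} {y' : ι → ℝ} {t : ℝ} (B : Matrix κ ι ℝ) (b : ι → ℝ)
    (h : HasDerivAt y y' t) : HasDerivAt (fun s => B *ᵥ (y s - b)) (B *ᵥ y') t :=
  B.mulVecLin.toContinuousLinearMap.hasFDerivAt.comp_hasDerivAt t (h.sub_const b)

namespace Matrix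

section Exp

variable {m n 𝔸 : Type*} [Fintype m] [DecidableEq m] [Fintype n] [DecidableEq n]
  [NormedRing 𝔸] [CompleteSpace 𝔸]

open scoped Norms.Operator

/- Instance search does not see that the operator norm's uniform structure is the `Pi` one, so
completeness has to be supplied by hand. -/
theorem completeSpace_linftyOp :
    @CompleteSpace (Matrix m m 𝔸) PseudoMetricSpace.toUniformSpace :=
  inferInstanceAs (CompleteSpace (m → m → 𝔸))

variable [NormedAlgebra ℚ 𝔸]

theorem exp_fromBlocks_zero₁₂_zero₂₁ (X : Matrix m m 𝔸) (Y : Matrix n n 𝔸) :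
    exp (fromBlocks X 0 0 Y) = fromBlocks (exp X) 0 0 (exp Y) := by
  let blockDiag : Matrix m m 𝔸 × Matrix n n 𝔸 →+* Matrix (m ⊕ n) (m ⊕ n) 𝔸 :=
    { toFun := fun P => fromBlocks P.1 0 0 P.2
      map_one' := fromBlocks_one
      map_mul' := fun P Q => by simp [fromBlocks_multiply]
      map_zero' := fromBlocks_zero
      map_add' := fun P Q => by simp [fromBlocks_add] }
  have hcont : Continuous blockDiag :=
    continuous_fst.matrix_fromBlocks continuous_const continuous_const continuous_snd
  have := completeSpace_linftyOp (m := m) (𝔸 := 𝔸)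
  have := completeSpace_linftyOp (m := n) (𝔸 := 𝔸)
  have key := map_exp blockDiag hcont (X, Y)
  simp only [blockDiag, RingHom.coe_mk, MonoidHom.coe_mk, OneHom.coe_mk, Prod.fst_exp,
    Prod.snd_exp] at key
  exact key.symm

theorem exp_reindex (e : m ≃ n) (M : Matrix m m 𝔸) :
    exp (reindex e e M) = reindex e e (exp M) := by
  have := completeSpace_linftyOp (m := m) (𝔸 := 𝔸)
  exact (map_exp (reindexAlgEquiv ℚ 𝔸 e) (continuous_id.matrix_reindex e e) M).symm

end Exp

section Homogeneous

variable {ι R : Type*} [Fintype ι]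

def homogeneousMatrix [Zero R] [One R] (B : Matrix ι ι R) (c : ι → R) :
    Matrix (ι ⊕ Fin 1) (ι ⊕ Fin 1) R :=
  fromBlocks B (replicateCol (Fin 1) c) 0 1

theorem homogeneousMatrix_mulVec_sumElim_one [NonAssocSemiring R] (B : Matrix ι ι R)
    (c w : ι → R) :
    homogeneousMatrix B c *ᵥ Sum.elim w 1 = Sum.elim (B *ᵥ w + c) 1 := by
  ext (j | j)
  · simp [homogeneousMatrix, mulVec, dotProduct]
  · obtain rfl := Subsingleton.elim j 0
    simp [homogeneousMatrix, mulVec, dotProduct]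

theorem det_homogeneousMatrix [DecidableEq ι] [CommRing R] (B : Matrix ι ι R) (c : ι → R) :
    (homogeneousMatrix B c).det = B.det := by
  simp [homogeneousMatrix]

noncomputable def affineConjugate [DecidableEq ι] [CommRing R] (M B : Matrix ι ι R)
    (c : ι → R) :
    Matrix (ι ⊕ Fin 1) (ι ⊕ Fin 1) R :=
  homogeneousMatrix B c * fromBlocks M 0 0 0 * (homogeneousMatrix B c)⁻¹

theorem exp_smul_affineConjugate_mulVec [DecidableEq ι] [NormedCommRing R] [NormedAlgebra ℚ R]
    [CompleteSpace R] (M B : Matrix ι ι R) (hB : IsUnit B.det) (c w : ι → R) (t : R) :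
    exp (t • affineConjugate M B c) *ᵥ Sum.elim (B *ᵥ w + c) 1 =
      Sum.elim (B *ᵥ (exp (t • M) *ᵥ w) + c) 1 := by
  set H := homogeneousMatrix B c
  have hH : IsUnit H.det := by rwa [det_homogeneousMatrix]
  have hflow : exp (t • fromBlocks M 0 0 (0 : Matrix (Fin 1) (Fin 1) R)) *ᵥ Sum.elim w 1 =
      Sum.elim (exp (t • M) *ᵥ w) 1 := by
    ext (j | j) <;> simp [fromBlocks_smul, exp_fromBlocks_zero₁₂_zero₂₁, fromBlocks_mulVec]
  rw [← homogeneousMatrix_mulVec_sumElim_one, ← homogeneousMatrix_mulVec_sumElim_one,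
    affineConjugate, ← smul_mul_assoc, ← mul_smul_comm,
    exp_conj _ _ ((isUnit_iff_isUnit_det H).2 hH), ← hflow, mulVec_mulVec, mulVec_mulVec,
    mul_assoc, nonsing_inv_mul _ hH, mul_one]

end Homogeneous

theorem exp_smul_reindex_affineConjugate_mulVec_snoc {R : Type*} [NormedCommRing R]
    [NormedAlgebra ℚ R] [CompleteSpace R] {N : ℕ} (M B : Matrix (Fin N) (Fin N) R)
    (hB : IsUnit B.det) (c w : Fin N → R) (t : R) :
    exp (t • reindex finSumFinEquiv finSumFinEquiv (affineConjugate M B c)) *ᵥ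
        Fin.snoc (B *ᵥ w + c) 1 =
      Fin.snoc (B *ᵥ (exp (t • M) *ᵥ w) + c) 1 := by
  have hsmul : t • reindex finSumFinEquiv finSumFinEquiv (affineConjugate M B c) =
      reindex finSumFinEquiv finSumFinEquiv (t • affineConjugate M B c) := rfl
  rw [hsmul, exp_reindex, reindex_apply, submatrix_mulVec_equiv,
    Fin.snoc_eq_sumElim_comp_finSumFinEquiv_symm, Fin.snoc_eq_sumElim_comp_finSumFinEquiv_symm]
  simp only [Equiv.symm_symm, Function.comp_assoc, Equiv.symm_comp_self, Function.comp_id]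
  exact congrArg (· ∘ _) (exp_smul_affineConjugate_mulVec M B hB c w t)

theorem reindex_fromBlocks_mulVec_append {R : Type*} [NonUnitalNonAssocSemiring R]
    {p q m n : ℕ} (A : Matrix (Fin p) (Fin m) R) (B : Matrix (Fin p) (Fin n) R)
    (C : Matrix (Fin q) (Fin m) R) (D : Matrix (Fin q) (Fin n) R)
    (u : Fin m → R) (v : Fin n → R) :
    reindex finSumFinEquiv finSumFinEquiv (fromBlocks A B C D) *ᵥ Fin.append u v =
      Fin.append (A *ᵥ u + B *ᵥ v) (C *ᵥ u + D *ᵥ v) := by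
  ext i
  induction i using Fin.addCases <;>
    simp [reindex_apply, submatrix_mulVec_equiv, fromBlocks_mulVec, Function.comp_def]

theorem reindex_fromBlocks_one_mulVec_append_add {R : Type*} [NonAssocSemiring R] {n k : ℕ}
    (A : Matrix (Fin n) (Fin n) R) (b x : Fin n → R) (u : Fin k → R) :
    reindex finSumFinEquiv finSumFinEquiv (fromBlocks A 0 0 1) *ᵥ Fin.append x u +
        Fin.append b 0 =
      Fin.append (A *ᵥ x + b) u := by
  rw [reindex_fromBlocks_mulVec_append]
  ext i
  induction i using Fin.addCases <;> simp

end Matrix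

theorem superlinearizable_affine_change_general {n : ℕ}
    (f : (Fin n → ℝ) → (Fin n → ℝ))
    (hfsl : IsSuperLinearizable f)
    (A : Matrix (Fin n) (Fin n) ℝ) (hA : IsUnit A.det) (b : Fin n → ℝ) :
    IsSuperLinearizable (fun y => A.mulVec (f (A⁻¹.mulVec (y - b)))) := by
  obtain ⟨k, M, p, hp, hlift⟩ := hfsl
  set A' : Matrix (Fin (n + k)) (Fin (n + k)) ℝ :=
    reindex finSumFinEquiv finSumFinEquiv (fromBlocks A 0 0 1)
  set b' : Fin (n + k) → ℝ := Fin.append b 0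
  have hA' : IsUnit A'.det := by simpa [A', det_fromBlocks_zero₂₁] using hA
  refine ⟨k + 1, (reindex finSumFinEquiv finSumFinEquiv (affineConjugate M A' b') :
      Matrix (Fin (n + k + 1)) (Fin (n + k + 1)) ℝ),
    fun y => Fin.snoc (p (A⁻¹ *ᵥ (y - b))) 1,
    (hp.comp_s7 (isPolyMap_mulVec_sub A⁻¹ b)).snoc 1, ?_⟩
  rintro _ y rfl hy t ht i
  set x : ℝ → Fin n → ℝ := fun s => A⁻¹ *ᵥ (y s - b)
  have hAx : ∀ s, A *ᵥ x s + b = y s := fun s => by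
    simp [x, mulVec_mulVec, mul_nonsing_inv _ hA]
  have hx : ∀ s, 0 ≤ s → HasDerivAt x (f (x s)) s := fun s hs => by
    simpa [mulVec_mulVec, nonsing_inv_mul _ hA] using (hy s hs).mulVec_sub_const A⁻¹ b
  have hinit : Fin.append (y 0) (Fin.snoc (p (x 0)) 1) =
      Fin.snoc (A' *ᵥ Fin.append (x 0) (p (x 0)) + b') 1 := by
    rw [reindex_fromBlocks_one_mulVec_append_add, hAx, Fin.append_snoc]
  obtain ⟨u, hu⟩ : ∃ u, exp (t • M) *ᵥ Fin.append (x 0) (p (x 0)) = Fin.append (x t) u :=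
    ⟨_, by rw [← funext (hlift (x 0) x rfl hx t ht), Fin.append_castAdd_natAdd]⟩
  have hcast : Fin.castAdd (k + 1) i = Fin.castSucc (Fin.castAdd k i) := rfl
  change (exp _ *ᵥ Fin.append (y 0) (Fin.snoc (p (x 0)) 1)) _ = _
  rw [hinit, exp_smul_reindex_affineConjugate_mulVec_snoc _ _ hA', hcast, Fin.snoc_castSucc, hu,
    reindex_fromBlocks_one_mulVec_append_add, Fin.append_left, hAx]

/-- Super-linearizability is preserved under affine automorphisms: if `f` is
super-linearizable and `φ(x) = Ax + b` with `A` invertible, then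
`h(y) = A f(A⁻¹(y − b))` is super-linearizable. -/
theorem superlinearizable_affine_change {n : ℕ}
    (f : (Fin n → ℝ) → (Fin n → ℝ))
    (hfpoly : IsPolyMap f) (hfsl : IsSuperLinearizable f)
    (A : Matrix (Fin n) (Fin n) ℝ) (hA : IsUnit A.det) (b : Fin n → ℝ) :
    IsSuperLinearizable (fun y => A.mulVec (f (A⁻¹.mulVec (y - b)))) :=
  superlinearizable_affine_change_general f hfsl A hA b
end

section
/- Let M = (a_{ij}) ∈ ℝ^{n×n}, let g be a real polynomial in n−1 variables, let φ(x) = (x₁, …, x_{n−1}, xₙ + g(x₁, …, x_{n−1})) be the corresponding elementary transformation of ℝⁿ, and let h : ℝⁿ → ℝⁿ be the vector field obtained from the linear system ẋ = Mx by the change of variables y = φ(x), i.e., h(y) = Dφ(φ⁻¹(y)) · M · φ⁻¹(y). Then there exist a polynomial p : ℝⁿ → ℝ and a polynomial vector field F : ℝ^{n+1} → ℝ^{n+1} satisfying the WDG condition such that F is a lift of h by p: for every y₀ ∈ ℝⁿ, every differentiable curve z : ℝ → ℝ^{n+1} with z(0) = (y₀, p(y₀)) and z'(t) = F(z(t)) for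 all t ≥ 0, and every differentiable curve y : ℝ → ℝⁿ with y(0) = y₀ and y'(t) = h(y(t)) for all t ≥ 0, one has Π_n(z(t)) = y(t) for all t ≥ 0. -/
open Matrix MvPolynomial

/-- The partial derivative of `h : ℝⁿ → ℝ` with respect to the `j`-th coordinate. -/
noncomputable def pd {n : ℕ} (h : (Fin n → ℝ) → ℝ) (j : Fin n) : (Fin n → ℝ) → ℝ :=
  fun x => fderiv ℝ h x (Pi.single j 1)

/-- The WDG (weighted dependency graph) condition for a vector field `h : ℝⁿ → ℝⁿ`:
along every cycle `i₀, i₁, …, i_m = i₀` (m ≥ 1) all of whose edge weights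
`∂h_{i_{ℓ+1}}/∂x_{i_ℓ}` are nonzero, the product of the edge weights is constant. -/
def SatisfiesWDG {n : ℕ} (h : (Fin n → ℝ) → (Fin n → ℝ)) : Prop :=
  ∀ m : ℕ, 1 ≤ m → ∀ c : ℕ → Fin n, c m = c 0 →
    (∀ ℓ < m, pd (fun x => h x (c (ℓ + 1))) (c ℓ) ≠ 0) →
    ∃ r : ℝ, ∀ x : Fin n → ℝ,
      (∏ ℓ ∈ Finset.range m, pd (fun x' => h x' (c (ℓ + 1))) (c ℓ) x) = r

/-!
In the coordinates `x = φ⁻¹(y)` the system is linear, `ẋ = Mx`. The lift keeps the observed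
coordinates `y₀, …, yₙ` and adds the observable `xₙ = yₙ - g(y₀, …, yₙ₋₁)`. Since
`x = (y₀, …, yₙ₋₁, xₙ)`, the lifted field `(Dφ(x)·Mx, (Mx)ₙ)` is polynomial in these coordinates
and never reads `yₙ`: that vertex is a sink of the dependency graph and all other components are
linear, so every cycle has constant weight. Along a solution `z` of the lift, the coordinates other
than `yₙ` solve `u̇ = Mu` with the same initial value as `φ⁻¹ ∘ y`, hence agree with it by
uniqueness for Lipschitz ODEs; the remaining coordinates then have the same derivative as `y` and
agree as well.
-/

namespace MvPolynomial

variable {R σ τ ι : Type*}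

theorem hasFDerivAt_eval [Fintype σ] [DecidableEq σ] (q : MvPolynomial σ ℝ) (x : σ → ℝ) :
    HasFDerivAt (fun v => eval v q)
      (∑ j, eval x (pderiv j q) • (ContinuousLinearMap.proj j : (σ → ℝ) →L[ℝ] ℝ)) x := by
  induction q using MvPolynomial.induction_on with
  | C a => simpa using hasFDerivAt_const a x
  | add p q hp hq =>
    simp only [map_add, add_smul, Finset.sum_add_distrib]
    exact hp.add hq
  | mul_X p i hp =>
    have hfun : (fun v => eval v (p * X i)) = fun v => eval v p * v i := by ext; simp
    have hderiv : ∑ j, eval x (pderiv j (p * X i)) • (ContinuousLinearMap.proj j : (σ → ℝ) →L[ℝ] ℝ)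
        = eval x p • ContinuousLinearMap.proj i
          + x i • ∑ j, eval x (pderiv j p) • (ContinuousLinearMap.proj j : (σ → ℝ) →L[ℝ] ℝ) := by
      ext u
      simp [pderiv_X, Pi.single_apply, apply_ite (eval x), add_mul, ite_mul, Finset.sum_add_distrib,
        Finset.mul_sum, mul_assoc]
    rw [hfun, hderiv]
    exact hp.mul (hasFDerivAt_apply i x)

theorem hasFDerivAt_eval_pi [Fintype σ] [DecidableEq σ] [Fintype ι] (Φ : ι → MvPolynomial σ ℝ)
    (x : σ → ℝ) :
    HasFDerivAt (fun x i => eval x (Φ i)) (ContinuousLinearMap.pi fun i =>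
      ∑ j, eval x (pderiv j (Φ i)) • (ContinuousLinearMap.proj j : (σ → ℝ) →L[ℝ] ℝ)) x :=
  hasFDerivAt_pi.2 fun i => hasFDerivAt_eval (Φ i) x

theorem fderiv_eval_pi_apply [Fintype σ] [DecidableEq σ] [Fintype ι] (Φ : ι → MvPolynomial σ ℝ)
    (x u : σ → ℝ) (i : ι) :
    fderiv ℝ (fun x i => eval x (Φ i)) x u i = ∑ j, eval x (pderiv j (Φ i)) * u j := by
  simp [(hasFDerivAt_eval_pi Φ x).fderiv]

noncomputable def jacobianMulVec [CommSemiring R] [Fintype σ] [DecidableEq σ]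
    (Φ : ι → MvPolynomial σ R) (V : σ → MvPolynomial σ R) (i : ι) : MvPolynomial σ R :=
  ∑ j, pderiv j (Φ i) * V j

theorem eval_jacobianMulVec [Fintype σ] [DecidableEq σ] [Fintype ι]
    (Φ : ι → MvPolynomial σ ℝ) (V : σ → MvPolynomial σ ℝ) (x : σ → ℝ) (i : ι) :
    eval x (jacobianMulVec Φ V i) =
      fderiv ℝ (fun x i => eval x (Φ i)) x (fun j => eval x (V j)) i := by
  simp [jacobianMulVec, fderiv_eval_pi_apply]

noncomputable def linearPoly [CommSemiring R] [Fintype σ] (a : σ → R) : MvPolynomial σ R :=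
  ∑ l, C (a l) * X l

theorem eval_linearPoly [CommSemiring R] [Fintype σ] (a x : σ → R) :
    eval x (linearPoly a) = a ⬝ᵥ x := by
  simp [linearPoly, dotProduct]

theorem pderiv_rename_of_notMem_range [CommSemiring R] [DecidableEq τ] {f : σ → τ} {j : τ}
    (hj : j ∉ Set.range f) (q : MvPolynomial σ R) : pderiv j (rename f q) = 0 :=
  pderiv_eq_zero_of_notMem_vars fun hmem => by
    obtain ⟨i, -, rfl⟩ := mem_vars_rename f q hmem
    exact hj ⟨i, rfl⟩

theorem exists_pderiv_rename_linearPoly_eq_C [CommSemiring R] [Fintype σ] [DecidableEq τ]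
    (f : σ → τ) (a : σ → R) (j : τ) : ∃ c, pderiv j (rename f (linearPoly a)) = C c :=
  ⟨∑ l, if f l = j then a l else 0, by
    simp [linearPoly, pderiv_X, Pi.single_apply, eq_comm, apply_ite C]⟩

end MvPolynomial

theorem pd_eval {N : ℕ} (q : MvPolynomial (Fin N) ℝ) (j : Fin N) (x : Fin N → ℝ) :
    pd (fun v => eval v q) j x = eval x (pderiv j q) := by
  simp [pd, (hasFDerivAt_eval q x).fderiv, Pi.single_apply]

theorem satisfiesWDG_of_sink {N : ℕ} (F : (Fin N → ℝ) → (Fin N → ℝ)) (s : Fin N)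
    (hsink : ∀ i, pd (fun x => F x i) s = 0)
    (hconst : ∀ i ≠ s, ∀ j, ∃ c, ∀ x, pd (fun x => F x i) j x = c) :
    SatisfiesWDG F := by
  intro m hm c hcycle hedge
  have hsource : ∀ ℓ < m, c ℓ ≠ s := fun ℓ hℓ hs => hedge ℓ hℓ (hs ▸ hsink _)
  have htarget : ∀ ℓ < m, c (ℓ + 1) ≠ s := by
    intro ℓ hℓ
    rcases Nat.lt_or_ge (ℓ + 1) m with hlt | hge
    · exact hsource _ hlt
    · rw [show ℓ + 1 = m by omega, hcycle]
      exact hsource 0 hm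
  choose! r hr using fun ℓ (hℓ : ℓ < m) => hconst _ (htarget ℓ hℓ) (c ℓ)
  exact ⟨∏ ℓ ∈ Finset.range m, r ℓ, fun x =>
    Finset.prod_congr rfl fun ℓ hℓ => hr ℓ (Finset.mem_range.1 hℓ) x⟩

theorem hasDerivAt_comp_of_hasDerivAt_fderiv_apply {E : Type*} [NormedAddCommGroup E]
    [NormedSpace ℝ E] {φ ψ : E → E} (hψφ : Function.LeftInverse ψ φ)
    (hφψ : Function.RightInverse ψ φ) (hφ : Differentiable ℝ φ) (hψ : Differentiable ℝ ψ)
    (V : E → E) {y : ℝ → E} {t : ℝ}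
    (hy : HasDerivAt y (fderiv ℝ φ (ψ (y t)) (V (ψ (y t)))) t) :
    HasDerivAt (ψ ∘ y) (V (ψ (y t))) t := by
  set x := ψ (y t)
  have hid : (fderiv ℝ ψ (φ x)).comp (fderiv ℝ φ x) = ContinuousLinearMap.id ℝ E := by
    rw [← fderiv_comp _ (hψ _) (hφ _), hψφ.comp_eq_id, fderiv_id]
  have := (hψ (y t)).hasFDerivAt.comp_hasDerivAt t hy
  rwa [← hφψ (y t), ← ContinuousLinearMap.comp_apply, hid] at this

section Ici

variable {E : Type*} [NormedAddCommGroup E] [NormedSpace ℝ E] {a : ℝ}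

theorem eqOn_Ici_of_hasDerivAt_eq {f g f' : ℝ → E} (hf : ∀ t ∈ Set.Ici a, HasDerivAt f (f' t) t)
    (hg : ∀ t ∈ Set.Ici a, HasDerivAt g (f' t) t) (ha : f a = g a) : Set.EqOn f g (Set.Ici a) :=
  fun t ht => eq_of_has_deriv_right_eq (fun s hs => (hf s hs.1).hasDerivWithinAt)
    (fun s hs => (hg s hs.1).hasDerivWithinAt)
    (HasDerivAt.continuousOn fun s hs => hf s hs.1) (HasDerivAt.continuousOn fun s hs => hg s hs.1)
    ha t ⟨ht, le_rfl⟩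

theorem ODE_solution_unique_Ici {K : NNReal} {V : E → E} (hV : LipschitzWith K V) {f g : ℝ → E}
    (hf : ∀ t ∈ Set.Ici a, HasDerivAt f (V (f t)) t)
    (hg : ∀ t ∈ Set.Ici a, HasDerivAt g (V (g t)) t) (ha : f a = g a) :
    Set.EqOn f g (Set.Ici a) :=
  fun _ ht => ODE_solution_unique (v := fun _ => V) (fun _ => hV)
    (HasDerivAt.continuousOn fun s hs => hf s hs.1) (fun s hs => (hf s hs.1).hasDerivWithinAt)
    (HasDerivAt.continuousOn fun s hs => hg s hs.1) (fun s hs => (hg s hs.1).hasDerivWithinAt)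
    ha ⟨ht, le_rfl⟩

end Ici

theorem Matrix.lipschitzWith_mulVec {m l : Type*} [Fintype m] [Fintype l]
    (M : Matrix m l ℝ) : ∃ K, LipschitzWith K M.mulVec :=
  ⟨_, M.mulVecLin.toContinuousLinearMap.lipschitz⟩

open Fin

section ElementaryLift

variable {n : ℕ}

noncomputable def elementaryMap (g : MvPolynomial (Fin n) ℝ) (x : Fin (n + 1) → ℝ) :
    Fin (n + 1) → ℝ :=
  Function.update x (last n) (x (last n) + eval (init x) g)

theorem elementaryMap_elementaryMap (g g' : MvPolynomial (Fin n) ℝ) (x : Fin (n + 1) → ℝ) :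
    elementaryMap g (elementaryMap g' x) = elementaryMap (g' + g) x := by
  simp [elementaryMap, init_update_last, add_assoc]

theorem elementaryMap_zero (x : Fin (n + 1) → ℝ) : elementaryMap 0 x = x := by
  simp [elementaryMap]

theorem leftInverse_elementaryMap_neg (g : MvPolynomial (Fin n) ℝ) :
    Function.LeftInverse (elementaryMap (-g)) (elementaryMap g) := fun x => by
  rw [elementaryMap_elementaryMap, add_neg_cancel, elementaryMap_zero]

theorem rightInverse_elementaryMap_neg (g : MvPolynomial (Fin n) ℝ) :
    Function.RightInverse (elementaryMap (-g)) (elementaryMap g) := fun x => by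
  rw [elementaryMap_elementaryMap, neg_add_cancel, elementaryMap_zero]

noncomputable def elementaryPoly (g : MvPolynomial (Fin n) ℝ) (i : Fin (n + 1)) :
    MvPolynomial (Fin (n + 1)) ℝ :=
  if i = last n then X i + rename castSucc g else X i

theorem elementaryMap_eq_eval (g : MvPolynomial (Fin n) ℝ) :
    elementaryMap g = fun x i => eval x (elementaryPoly g i) := by
  ext x i
  by_cases hi : i = last n
  · subst hi
    simp [elementaryMap, elementaryPoly, eval_rename, init_def, Function.comp_def]
  · simp [elementaryMap, elementaryPoly, hi]

theorem differentiable_elementaryMap (g : MvPolynomial (Fin n) ℝ) :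
    Differentiable ℝ (elementaryMap g) := by
  rw [elementaryMap_eq_eval]
  exact fun x => (hasFDerivAt_eval_pi _ x).differentiableAt

theorem jacobianMulVec_elementaryPoly_of_ne_last (g : MvPolynomial (Fin n) ℝ)
    (V : Fin (n + 1) → MvPolynomial (Fin (n + 1)) ℝ) {i : Fin (n + 1)} (hi : i ≠ last n) :
    jacobianMulVec (elementaryPoly g) V i = V i := by
  simp [jacobianMulVec, elementaryPoly, hi, pderiv_X, Pi.single_apply]

/- Coordinates on `ℝⁿ⁺²` are `(y₀, …, yₙ, xₙ)`; deleting index `n` (the coordinate `yₙ`) leaves the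
linear state `x = (y₀, …, yₙ₋₁, xₙ)`, on which the first `n + 1` components are `Dφ(x)·Mx` and the
last is `(Mx)ₙ`. -/
noncomputable def liftPoly (M : Matrix (Fin (n + 1)) (Fin (n + 1)) ℝ) (g : MvPolynomial (Fin n) ℝ)
    (i : Fin (n + 2)) : MvPolynomial (Fin (n + 2)) ℝ :=
  rename (last n).castSucc.succAbove <| snoc (α := fun _ => MvPolynomial (Fin (n + 1)) ℝ)
    (jacobianMulVec (elementaryPoly g) fun k => linearPoly (M k)) (linearPoly (M (last n))) i

theorem liftPoly_succAbove (M : Matrix (Fin (n + 1)) (Fin (n + 1)) ℝ) (g : MvPolynomial (Fin n) ℝ)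
    (k : Fin (n + 1)) :
    liftPoly M g ((last n).castSucc.succAbove k) =
      rename (last n).castSucc.succAbove (linearPoly (M k)) := by
  rw [liftPoly]
  congr 1
  by_cases hk : k = last n
  · subst hk
    simp
  · obtain ⟨j, rfl⟩ := exists_castSucc_eq.2 hk
    rw [succAbove_castSucc_of_lt _ _ (castSucc_lt_last j), snoc_castSucc,
      jacobianMulVec_elementaryPoly_of_ne_last g _ hk]

theorem eval_liftPoly_castSucc (M : Matrix (Fin (n + 1)) (Fin (n + 1)) ℝ)
    (g : MvPolynomial (Fin n) ℝ) (w : Fin (n + 2) → ℝ) (i : Fin (n + 1)) :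
    eval w (liftPoly M g i.castSucc) = fderiv ℝ (elementaryMap g) (removeNth (last n).castSucc w)
      (M *ᵥ removeNth (last n).castSucc w) i := by
  rw [liftPoly, snoc_castSucc, eval_rename, eval_jacobianMulVec, elementaryMap_eq_eval]
  simp only [eval_linearPoly]
  rfl

theorem satisfiesWDG_liftPoly (M : Matrix (Fin (n + 1)) (Fin (n + 1)) ℝ)
    (g : MvPolynomial (Fin n) ℝ) : SatisfiesWDG fun w i => eval w (liftPoly M g i) := by
  refine satisfiesWDG_of_sink _ (last n).castSucc (fun i => ?_) (fun i hi j => ?_)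
  · ext x
    rw [pd_eval, liftPoly, pderiv_rename_of_notMem_range (by simp)]
    simp
  · obtain ⟨k, rfl⟩ := exists_succAbove_eq hi
    obtain ⟨c, hc⟩ := exists_pderiv_rename_linearPoly_eq_C (last n).castSucc.succAbove (M k) j
    exact ⟨c, fun x => by rw [pd_eval, liftPoly_succAbove, hc, eval_C]⟩

theorem removeNth_snoc_eval_elementaryPoly_last (g : MvPolynomial (Fin n) ℝ)
    (y : Fin (n + 1) → ℝ) :
    removeNth (last n).castSucc (snoc (α := fun _ => ℝ) y (eval y (elementaryPoly g (last n)))) =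
      elementaryMap g y := by
  rw [elementaryMap_eq_eval]
  ext k
  induction k using lastCases with
  | last => simp [removeNth]
  | cast j => simp [removeNth, succAbove_castSucc_of_lt, elementaryPoly, castSucc_lt_last]

variable {M : Matrix (Fin (n + 1)) (Fin (n + 1)) ℝ} {g : MvPolynomial (Fin n) ℝ}
  {z : ℝ → Fin (n + 2) → ℝ} {t : ℝ}

theorem hasDerivAt_removeNth_of_hasDerivAt_liftPoly
    (hz : HasDerivAt z (fun i => eval (z t) (liftPoly M g i)) t) :
    HasDerivAt (fun s => removeNth (last n).castSucc (z s))
      (M *ᵥ removeNth (last n).castSucc (z t)) t :=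
  hasDerivAt_pi.2 fun k => by
    have := hasDerivAt_pi.1 hz ((last n).castSucc.succAbove k)
    rwa [liftPoly_succAbove, eval_rename, eval_linearPoly] at this

theorem hasDerivAt_init_of_hasDerivAt_liftPoly
    (hz : HasDerivAt z (fun i => eval (z t) (liftPoly M g i)) t) :
    HasDerivAt (fun s => init (z s)) (fderiv ℝ (elementaryMap g) (removeNth (last n).castSucc (z t))
      (M *ᵥ removeNth (last n).castSucc (z t))) t :=
  hasDerivAt_pi.2 fun i => by
    have := hasDerivAt_pi.1 hz i.castSucc
    rwa [eval_liftPoly_castSucc] at this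

end ElementaryLift

/-- Transforming a linear system `ẋ = Mx` on `ℝ^{n+1}` by an elementary transformation
`φ(x) = (x₁, …, xₙ, x_{n+1} + g(x₁, …, xₙ))` yields a vector field
`h(y) = Dφ(φ⁻¹(y))·M·φ⁻¹(y)` which, after adding one stabilizing polynomial observable `p`,
lifts to a polynomial vector field `F` on `ℝ^{n+2}` satisfying the WDG condition. -/
theorem linear_elementary_stabilizing_observable {n : ℕ}
    (M : Matrix (Fin (n + 1)) (Fin (n + 1)) ℝ)
    (g : MvPolynomial (Fin n) ℝ)
    (φ φinv : (Fin (n + 1) → ℝ) → (Fin (n + 1) → ℝ))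
    (hφ : ∀ x, φ x = Function.update x (Fin.last n)
      (x (Fin.last n) + MvPolynomial.eval (fun i => x i.castSucc) g))
    (hφinv : ∀ y, φinv y = Function.update y (Fin.last n)
      (y (Fin.last n) - MvPolynomial.eval (fun i => y i.castSucc) g))
    (h : (Fin (n + 1) → ℝ) → (Fin (n + 1) → ℝ))
    (hh : ∀ y, h y = fderiv ℝ φ (φinv y) (M.mulVec (φinv y))) :
    ∃ (p : MvPolynomial (Fin (n + 1)) ℝ)
      (F : (Fin (n + 2) → ℝ) → (Fin (n + 2) → ℝ)),
      IsPolyMap F ∧ SatisfiesWDG F ∧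
      ∀ (y₀ : Fin (n + 1) → ℝ) (z : ℝ → (Fin (n + 2) → ℝ)) (y : ℝ → (Fin (n + 1) → ℝ)),
        z 0 = Fin.snoc y₀ (MvPolynomial.eval y₀ p) →
        (∀ t : ℝ, 0 ≤ t → HasDerivAt z (F (z t)) t) →
        y 0 = y₀ →
        (∀ t : ℝ, 0 ≤ t → HasDerivAt y (h (y t)) t) →
        ∀ t : ℝ, 0 ≤ t → ∀ i : Fin (n + 1), z t i.castSucc = y t i := by
  obtain rfl : φ = elementaryMap g := funext hφ
  obtain rfl : φinv = elementaryMap (-g) := funext fun y => by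
    simp [hφinv, elementaryMap, init_def, sub_eq_add_neg]
  refine ⟨elementaryPoly (-g) (last n), fun w i => eval w (liftPoly M g i),
    ⟨liftPoly M g, fun _ _ => rfl⟩, satisfiesWDG_liftPoly M g, ?_⟩
  intro y₀ z y hz0 hz hy0 hy t ht i
  obtain ⟨K, hK⟩ := M.lipschitzWith_mulVec
  have hstate : Set.EqOn (fun s => removeNth (last n).castSucc (z s)) (elementaryMap (-g) ∘ y)
      (Set.Ici 0) :=
    ODE_solution_unique_Ici hK (fun s hs => hasDerivAt_removeNth_of_hasDerivAt_liftPoly (hz s hs))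
      (fun s hs => hasDerivAt_comp_of_hasDerivAt_fderiv_apply (leftInverse_elementaryMap_neg g)
        (rightInverse_elementaryMap_neg g) (differentiable_elementaryMap g)
        (differentiable_elementaryMap (-g)) _ (hh (y s) ▸ hy s hs))
      (by rw [hz0, Function.comp_apply, hy0, removeNth_snoc_eval_elementaryPoly_last])
  have hobserved : Set.EqOn (fun s => init (z s)) y (Set.Ici 0) :=
    eqOn_Ici_of_hasDerivAt_eq (fun s hs => by
        have := hasDerivAt_init_of_hasDerivAt_liftPoly (hz s hs)
        rwa [show removeNth _ (z s) = elementaryMap (-g) (y s) from hstate hs, ← hh] at this)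
      hy (by rw [hz0, hy0, init_snoc])
  exact congrFun (hobserved ht) i
end

section
/- Let f : ℝ² → ℝ² be the smooth vector field f(z₁, z₂) = (√(1 + z₁²) · arsinh(z₂), √(1 + z₂²) · arsinh(z₁)). Then for every k ∈ ℕ, the iterated Lie derivative L_f^{k+1} f does not belong to the real vector space spanned by {f, L_f f, …, L_f^k f} inside the space of smooth maps ℝ² → ℝ². -/
open Matrix MvPolynomial

/-- The Lie derivative of a vector field `g` along a vector field `f`:
`(L_f g)_i = Σ_j (∂g_i/∂x_j) f_j`. -/
noncomputable def LieD {n : ℕ} (f g : (Fin n → ℝ) → (Fin n → ℝ)) :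
    (Fin n → ℝ) → (Fin n → ℝ) :=
  fun x i => fderiv ℝ (fun x' => g x' i) x (f x)

/-- The vector field `f(z₁, z₂) = (√(1+z₁²)·arsinh z₂, √(1+z₂²)·arsinh z₁)`. -/
noncomputable def fEx : (Fin 2 → ℝ) → (Fin 2 → ℝ) := fun z =>
  ![Real.sqrt (1 + z 0 ^ 2) * Real.arsinh (z 1),
    Real.sqrt (1 + z 1 ^ 2) * Real.arsinh (z 0)]

/-!
On the diagonal `z₁ = z₂` the field `f` is a multiple of `(1, 1)`, so `L_f` differentiates only
along the diagonal, and after the substitution `z₁ = z₂ = sinh t` the first component of `L_f^k f`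
there is `θ^k (t cosh t)` with `θ = t d/dt`. Writing it as `(A_k(t) eᵗ + B_k(t) e⁻ᵗ) / 2`, the
polynomials obey `A_{k+1} = t (A_k' + A_k)` and `B_{k+1} = t (B_k' - B_k)`, so `deg A_k = k + 1`.
Since `(A, B) ↦ (A(t) eᵗ + B(t) e⁻ᵗ) / 2` is injective, a linear relation among the `L_f^j f`
would give one among the `A_j`, which the degrees forbid.
-/

open Real Polynomial Filter Topology
open scoped ContDiff

section LieD

variable {n : ℕ} {f g : (Fin n → ℝ) → (Fin n → ℝ)}

theorem ContDiff.lieD {m : WithTop ℕ∞} (hf : ContDiff ℝ m f) (hg : ContDiff ℝ (m + 1) g) :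
    ContDiff ℝ m (LieD f g) :=
  contDiff_pi.2 fun i => ((contDiff_pi.1 hg i).fderiv_right le_rfl).clm_apply hf

theorem ContDiff.iterate_lieD (hf : ContDiff ℝ ∞ f) (hg : ContDiff ℝ ∞ g) (k : ℕ) :
    ContDiff ℝ ∞ ((LieD f)^[k] g) := by
  induction k with
  | zero => exact hg
  | succ k ih =>
    rw [Function.iterate_succ_apply']
    exact hf.lieD ih

theorem lieD_apply_const {s a : ℝ} (hg : DifferentiableAt ℝ g fun _ => s)
    (hf : f (fun _ => s) = fun _ => a) (i : Fin n) :
    LieD f g (fun _ => s) i = a * deriv (fun s => g (fun _ => s) i) s := by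
  have hdiag : HasDerivAt (fun s : ℝ => fun _ : Fin n => s) (fun _ => 1) s :=
    hasDerivAt_pi.2 fun _ => hasDerivAt_id s
  have hgi : HasDerivAt (fun s => g (fun _ => s) i)
      (fderiv ℝ (fun x => g x i) (fun _ => s) fun _ => 1) s := by
    have hgi' : DifferentiableAt ℝ (fun x => g x i) fun _ => s := differentiableAt_pi.1 hg i
    exact hgi'.hasFDerivAt.comp_hasDerivAt s hdiag
  rw [hgi.deriv, LieD, hf, show (fun _ : Fin n => a) = a • fun _ => (1 : ℝ) by ext; simp,
    map_smul, smul_eq_mul]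

end LieD

noncomputable def expEuler (c : ℝ) (p : ℝ[X]) : ℝ[X] :=
  Polynomial.X * (derivative p + Polynomial.C c * p)

theorem degree_expEuler {c : ℝ} (hc : c ≠ 0) (p : ℝ[X]) :
    (expEuler c p).degree = p.degree + 1 := by
  have hsum : (derivative p + Polynomial.C c * p).degree = p.degree := by
    rcases eq_or_ne p 0 with rfl | hp
    · simp
    rw [Polynomial.degree_add_eq_right_of_degree_lt, Polynomial.degree_C_mul hc]
    rw [Polynomial.degree_C_mul hc]
    exact Polynomial.degree_derivative_lt hp
  rw [expEuler, degree_mul, degree_X, hsum, add_comm]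

theorem degree_iterate_expEuler {c : ℝ} (hc : c ≠ 0) (p : ℝ[X]) (k : ℕ) :
    ((expEuler c)^[k] p).degree = p.degree + k := by
  induction k with
  | zero => simp
  | succ k ih =>
    rw [Function.iterate_succ_apply', degree_expEuler hc, ih, Nat.cast_succ, add_assoc]

noncomputable def expPoly : ℝ[X] × ℝ[X] →ₗ[ℝ] ℝ → ℝ where
  toFun pq t := (pq.1.eval t * exp t + pq.2.eval t * exp (-t)) / 2
  map_add' _ _ := by
    ext
    simp only [Prod.fst_add, Prod.snd_add, Polynomial.eval_add, Pi.add_apply]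
    ring
  map_smul' _ _ := by
    ext
    simp only [Prod.smul_fst, Prod.smul_snd, Polynomial.eval_smul, smul_eq_mul,
      RingHom.id_apply, Pi.smul_apply]
    ring

theorem expPoly_apply (p q : ℝ[X]) (t : ℝ) :
    expPoly (p, q) t = (p.eval t * exp t + q.eval t * exp (-t)) / 2 :=
  rfl

theorem mul_deriv_expPoly (p q : ℝ[X]) (t : ℝ) :
    t * deriv (expPoly (p, q)) t = expPoly (expEuler 1 p, expEuler (-1) q) t := by
  have hp := (p.hasDerivAt t).mul (hasDerivAt_exp t)
  have hq := (q.hasDerivAt t).mul (hasDerivAt_neg' t).exp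
  have h : HasDerivAt (expPoly (p, q)) _ t := (hp.add hq).div_const 2
  rw [h.deriv, expPoly_apply, expEuler, expEuler]
  simp only [Polynomial.eval_mul, Polynomial.eval_X, Polynomial.eval_add, Polynomial.eval_C]
  ring

theorem eq_zero_of_eval_mul_exp_add_eval_mul_exp_neg_eq_zero {p q : ℝ[X]}
    (h : ∀ t, p.eval t * exp t + q.eval t * exp (-t) = 0) : p = 0 := by
  have hp : ∀ t, p.eval t = -(q.eval t / exp t * exp (-t)) := fun t => by
    field_simp
    linear_combination h t
  have hlim : Tendsto (fun t => p.eval t) atTop (𝓝 0) := by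
    simpa only [← hp, zero_mul, neg_zero] using
      ((q.tendsto_div_exp_atTop).mul tendsto_exp_neg_atTop_nhds_zero).neg
  exact Polynomial.leadingCoeff_eq_zero.1 ((Polynomial.tendsto_nhds_iff p).1 hlim).1

theorem expPoly_injective : Function.Injective expPoly := by
  refine (injective_iff_map_eq_zero expPoly).2 fun ⟨p, q⟩ h => ?_
  have hpq : ∀ t, p.eval t * exp t + q.eval t * exp (-t) = 0 := fun t => by
    simpa [expPoly_apply] using congrFun h t
  obtain rfl := eq_zero_of_eval_mul_exp_add_eval_mul_exp_neg_eq_zero hpq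
  have hq : q = 0 := Polynomial.funext fun t => by
    simpa [(exp_pos (-t)).ne'] using hpq t
  rw [hq, Prod.mk_zero_zero]

theorem iterate_expEuler_not_mem_span {c : ℝ} (hc : c ≠ 0) {p : ℝ[X]} (hp : p ≠ 0) (k : ℕ) :
    (expEuler c)^[k + 1] p ∉
      Submodule.span ℝ (Set.range fun j : Fin (k + 1) => (expEuler c)^[(j : ℕ)] p) := by
  have hdeg (j : ℕ) : ((expEuler c)^[j] p).degree = (p.natDegree + j : ℕ) := by
    rw [degree_iterate_expEuler hc, Polynomial.degree_eq_natDegree hp, Nat.cast_add]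
  intro h
  have hle : (expEuler c)^[k + 1] p ∈ Polynomial.degreeLE ℝ (p.natDegree + k : ℕ) := by
    refine Submodule.span_le.2 ?_ h
    rintro _ ⟨j, rfl⟩
    rw [SetLike.mem_coe, Polynomial.mem_degreeLE, hdeg]
    exact_mod_cast (by omega : p.natDegree + j ≤ p.natDegree + k)
  rw [Polynomial.mem_degreeLE, hdeg] at hle
  exact absurd (by exact_mod_cast hle : p.natDegree + (k + 1) ≤ p.natDegree + k) (by omega)

theorem contDiff_fEx : ContDiff ℝ ∞ fEx := by
  have hsqrt (i : Fin 2) : ContDiff ℝ ∞ fun z : Fin 2 → ℝ => √(1 + z i ^ 2) :=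
    (contDiff_const.add ((contDiff_apply ℝ ℝ i).pow 2)).sqrt fun z => by positivity
  have harsinh (i : Fin 2) : ContDiff ℝ ∞ fun z : Fin 2 → ℝ => arsinh (z i) :=
    contDiff_arsinh.comp (contDiff_apply ℝ ℝ i)
  refine contDiff_pi.2 fun i => ?_
  fin_cases i
  · exact (hsqrt 0).mul (harsinh 1)
  · exact (hsqrt 1).mul (harsinh 0)

theorem fEx_const (s : ℝ) : fEx (fun _ => s) = fun _ => √(1 + s ^ 2) * arsinh s := by
  funext i
  fin_cases i <;> rfl

/-- Restriction to the diagonal `z₁ = z₂ = sinh t`: the substitution `z = sinh t` turns the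
coefficient `√(1 + z²) · arsinh z` of `fEx` there into `t cosh t`. -/
noncomputable def sinhDiag : ((Fin 2 → ℝ) → (Fin 2 → ℝ)) →ₗ[ℝ] ℝ → ℝ where
  toFun g t := g (fun _ => sinh t) 0
  map_add' _ _ := rfl
  map_smul' _ _ := rfl

theorem sinhDiag_fEx : sinhDiag fEx = expPoly (Polynomial.X, Polynomial.X) := by
  ext t
  change fEx (fun _ => sinh t) 0 = _
  rw [fEx_const, ← cosh_arsinh, arsinh_sinh, expPoly_apply, cosh_eq, Polynomial.eval_X]
  ring

theorem sinhDiag_lieD_fEx {g : (Fin 2 → ℝ) → (Fin 2 → ℝ)} (hg : Differentiable ℝ g) (t : ℝ) :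
    sinhDiag (LieD fEx g) t = t * deriv (sinhDiag g) t := by
  have hdiag : DifferentiableAt ℝ (fun s => g (fun _ => s) 0) (sinh t) :=
    (differentiableAt_pi.1 (hg _) 0).comp (sinh t)
      (differentiableAt_pi.2 fun _ => differentiableAt_id)
  have hsinh : HasDerivAt (sinhDiag g) (deriv (fun s => g (fun _ => s) 0) (sinh t) * cosh t) t :=
    hdiag.hasDerivAt.comp t (hasDerivAt_sinh t)
  change LieD fEx g (fun _ => sinh t) 0 = _
  rw [lieD_apply_const (hg _) (fEx_const _), ← cosh_arsinh, arsinh_sinh, hsinh.deriv]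
  ring

theorem sinhDiag_iterate_lieD_fEx (k : ℕ) :
    sinhDiag ((LieD fEx)^[k] fEx) =
      expPoly ((expEuler 1)^[k] Polynomial.X, (expEuler (-1))^[k] Polynomial.X) := by
  induction k with
  | zero => exact sinhDiag_fEx
  | succ k ih =>
    have hdiff := (contDiff_fEx.iterate_lieD contDiff_fEx k).differentiable (by simp)
    ext t
    rw [Function.iterate_succ_apply', sinhDiag_lieD_fEx hdiff, ih, mul_deriv_expPoly,
      Function.iterate_succ_apply', Function.iterate_succ_apply']

/-- For the vector field `f(z₁, z₂) = (√(1+z₁²)·arsinh z₂, √(1+z₂²)·arsinh z₁)` and every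
`k`, the Lie derivative `L_f^{k+1} f` does not belong to the span of `{f, L_f f, …, L_f^k f}`. -/
theorem lieD_fEx_succ_not_mem_span (k : ℕ) :
    (LieD fEx)^[k + 1] fEx ∉
      Submodule.span ℝ (Set.range fun j : Fin (k + 1) => (LieD fEx)^[(j : ℕ)] fEx) := by
  set E : ℕ → ℝ[X] × ℝ[X] := fun j =>
    ((expEuler 1)^[j] Polynomial.X, (expEuler (-1))^[j] Polynomial.X)
  intro h
  have hE : E (k + 1) ∈ Submodule.span ℝ (Set.range fun j : Fin (k + 1) => E j) := by
    have := Submodule.apply_mem_span_image_of_mem_span sinhDiag h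
    rw [← Set.range_comp] at this
    simp only [Function.comp_def, sinhDiag_iterate_lieD_fEx] at this
    rwa [← Function.comp_def expPoly, Set.range_comp,
      Submodule.apply_mem_span_image_iff_mem_span expPoly_injective] at this
  have hA := Submodule.apply_mem_span_image_of_mem_span (LinearMap.fst ℝ _ _) hE
  rw [← Set.range_comp] at hA
  exact iterate_expEuler_not_mem_span one_ne_zero Polynomial.X_ne_zero k hA
end
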